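/- Let Q ∈ ℤ[x_1,…,x_n] be an integral polynomial and suppose there are constants β > 2 and C_0 ≥ 1 such that |F_q(a,0)| ≤ C_0 q^{−β} for every integer q ≥ 2 and every a ∈ U_q. Then there is a constant C', depending only on β and C_0, such that |V_λ(q)| ≤ C' q^{n−1} for every integer q ≥ 1 and every λ ∈ ℤ. -/

import Mathlib

open scoped BigOperators

noncomputable section

/-- `e(t) = e^{2πit}`. -/
def e2pi (t : ℝ) : ℂ := Complex.exp (2 * Real.pi * Complex.I * t)

/-- The normalized Weyl sum `F_d(a, 𝐚) = d^{-n} ∑_{s ∈ Z_d^n} e((a·Q(s) + s·𝐚)/d)`. -/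
def weylF (n : ℕ) (Q : MvPolynomial (Fin n) ℤ) (d : ℕ) (a : ℤ) (av : Fin n → ℤ) : ℂ :=
  ((d : ℂ) ^ n)⁻¹ *
    ∑ s : Fin n → Fin d,
      e2pi (((a * MvPolynomial.eval (fun i => ((s i : ℕ) : ℤ)) Q
        + ∑ i, ((s i : ℕ) : ℤ) * av i : ℤ) : ℝ) / (d : ℝ))

/-- `|V_λ(d)| = #{s ∈ (ℤ/dℤ)^n : Q(s) = λ}`. -/
def Vcard (n : ℕ) (Q : MvPolynomial (Fin n) ℤ) (d : ℕ) (lam : ℤ) : ℕ :=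
  Nat.card {s : Fin n → ZMod d //
    MvPolynomial.eval s (MvPolynomial.map (Int.castRingHom (ZMod d)) Q) = (lam : ZMod d)}

/-!
Orthogonality of the additive characters of `ℤ/qℤ` gives
`q · |V_λ(q)| = ∑_{a mod q} e(-aλ/q) q^n F_q(a, 0)`,
hence `|V_λ(q)| ≤ q^{n-1} ∑_{a mod q} |F_q(a, 0)|`.
Writing `a/q = b/d` in lowest terms does not change `F_q(a, 0)`, because the summand only
depends on `s mod d` and reduction `(ℤ/qℤ)^n → (ℤ/dℤ)^n` has fibres of equal size.
Each `d ∣ q` arises from `φ(d) ≤ d` residues `a`, so the sum is at most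
`C₀ ∑_{d ∣ q} d^{1-β} ≤ C₀ ∑_d d^{1-β}`, which is finite since `β > 2`.
-/

open Finset

lemma AddMonoidHom.card_smul_sum_comp_of_surjective {G H M : Type*} [AddGroup G] [Fintype G]
    [AddGroup H] [Fintype H] [AddCommMonoid M] (π : G →+ H) (hπ : Function.Surjective π)
    (F : H → M) :
    Fintype.card H • ∑ x, F (π x) = Fintype.card G • ∑ y, F y := by
  classical
  set c := #{x | π x = 0}
  have hfiber (y : H) : #{x | π x = y} = c :=
    AddMonoidHom.card_fiber_eq_of_mem_range π (hπ y) (hπ 0)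
  have hsum : ∑ x, F (π x) = c • ∑ y, F y := by
    rw [← sum_fiberwise univ π, smul_sum]
    refine sum_congr rfl fun y _ => ?_
    rw [sum_congr rfl fun x hx => by rw [(mem_filter.mp hx).2], sum_const, hfiber]
  have hcard : Fintype.card G = Fintype.card H * c := by
    rw [← card_univ, card_eq_sum_card_fiberwise (f := π) (t := univ) (fun _ _ => mem_univ _)]
    simp [hfiber]
  rw [hsum, smul_smul, hcard]

lemma Nat.sum_range_comp_div_gcd {M : Type*} [AddCommMonoid M] (q : ℕ) (f : ℕ → M) :
    ∑ k ∈ range q, f (q / q.gcd k) = ∑ d ∈ q.divisors, d.totient • f d := by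
  rcases q.eq_zero_or_pos with rfl | hq
  · simp
  rw [← Nat.sum_div_divisors q, ← sum_fiberwise_of_maps_to (g := q.gcd) (t := q.divisors)
    fun k _ => Nat.mem_divisors.mpr ⟨Nat.gcd_dvd_left q k, hq.ne'⟩]
  refine sum_congr rfl fun g hg => ?_
  rw [sum_congr rfl fun k hk => by rw [(mem_filter.mp hk).2], sum_const,
    ← Nat.totient_div_of_dvd (Nat.dvd_of_mem_divisors hg)]

namespace ZMod

lemma bijective_natCast_fin (q : ℕ) [NeZero q] :
    Function.Bijective fun i : Fin q => ((i : ℕ) : ZMod q) := by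
  refine (Fintype.bijective_iff_injective_and_card _).mpr ⟨fun i j hij => ?_, by simp⟩
  simpa [ZMod.val_natCast_of_lt i.2, ZMod.val_natCast_of_lt j.2, Fin.val_inj]
    using congrArg ZMod.val hij

lemma sum_pi_fin_natCast {M : Type*} [AddCommMonoid M] (n q : ℕ) [NeZero q]
    (F : (Fin n → ZMod q) → M) :
    ∑ s : Fin n → Fin q, F (fun i => ((s i : ℕ) : ZMod q)) = ∑ x, F x :=
  Fintype.sum_bijective _ (Function.Bijective.piMap fun _ => bijective_natCast_fin q) _ _
    fun _ => rfl

lemma sum_range_natCast {M : Type*} [AddCommMonoid M] (q : ℕ) [NeZero q] (F : ZMod q → M) :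
    ∑ k ∈ range q, F k = ∑ x, F x := by
  rw [← Fin.sum_univ_eq_sum_range (fun k => F k)]
  exact Fintype.sum_bijective _ (bijective_natCast_fin q) _ _ fun _ => rfl

lemma stdAddChar_natCast_mul {g d : ℕ} [NeZero g] [NeZero d] (x : ZMod (g * d)) :
    stdAddChar ((g : ZMod (g * d)) * x) = stdAddChar (castHom (dvd_mul_left d g) (ZMod d) x) := by
  obtain ⟨m, rfl⟩ := ZMod.intCast_surjective x
  have hg : (g : ℂ) ≠ 0 := Nat.cast_ne_zero.mpr (NeZero.ne g)
  rw [map_intCast, ← Int.cast_natCast, ← Int.cast_mul, stdAddChar_coe, stdAddChar_coe]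
  congr 1
  push_cast
  field_simp

lemma card_fiber_mul_eq_sum_stdAddChar {X : Type*} [Fintype X] {q : ℕ} [NeZero q]
    (P : X → ZMod q) (c : ZMod q) [DecidablePred fun x => P x = c] :
    (#{x | P x = c} : ℂ) * q =
      ∑ a : ZMod q, stdAddChar (-(a * c)) * ∑ x, stdAddChar (a * P x) := by
  have horth (x : X) :
      ∑ a : ZMod q, stdAddChar (a * (P x - c)) = if P x = c then (q : ℂ) else 0 := by
    rw [AddChar.sum_mulShift _ (isPrimitive_stdAddChar q), ZMod.card]
    simp [sub_eq_zero]
  simp_rw [mul_sum, ← AddChar.map_add_eq_mul]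
  rw [sum_comm]
  simp_rw [neg_add_eq_sub, ← mul_sub, horth]
  rw [sum_ite, sum_const_zero, add_zero, sum_const, nsmul_eq_mul]

end ZMod

lemma e2pi_intCast_div (q : ℕ) [NeZero q] (m : ℤ) :
    e2pi (m / q) = ZMod.stdAddChar (m : ZMod q) := by
  rw [ZMod.stdAddChar_coe, e2pi]
  push_cast
  ring_nf

open ZMod MvPolynomial

section WeylSum

variable (n : ℕ) (Q : MvPolynomial (Fin n) ℤ)

lemma weylF_zero_eq_sum_zmod (q : ℕ) [NeZero q] (a : ℤ) :
    weylF n Q q a 0 = ((q : ℂ) ^ n)⁻¹ * ∑ x : Fin n → ZMod q,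
      stdAddChar ((a : ZMod q) * eval x (map (Int.castRingHom (ZMod q)) Q)) := by
  rw [weylF, ← sum_pi_fin_natCast]
  congr 1
  refine sum_congr rfl fun s _ => ?_
  have hcast : eval (fun i => ((s i : ℕ) : ZMod q)) (map (Int.castRingHom (ZMod q)) Q)
      = ((eval (fun i => ((s i : ℕ) : ℤ)) Q : ℤ) : ZMod q) := by
    rw [← eq_intCast (Int.castRingHom (ZMod q)), map_eval]
    simp [Function.comp_def]
  simp only [Pi.zero_apply, mul_zero, sum_const_zero, add_zero]
  rw [e2pi_intCast_div, hcast, Int.cast_mul]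

lemma weylF_one : weylF n Q 1 0 0 = 1 := by
  simp [weylF, e2pi]

lemma weylF_natCast_mul_mul (g d : ℕ) [NeZero g] [NeZero d] (b : ℤ) :
    weylF n Q (g * d) (g * b) 0 = weylF n Q d b 0 := by
  set c := castHom (dvd_mul_left d g) (ZMod d)
  set π : (Fin n → ZMod (g * d)) →+ (Fin n → ZMod d) := c.toAddMonoidHom.compLeft (Fin n)
  have hterm (x : Fin n → ZMod (g * d)) :
      stdAddChar (((g * b : ℤ) : ZMod (g * d)) * eval x (map (Int.castRingHom _) Q))
        = stdAddChar ((b : ZMod d) * eval (π x) (map (Int.castRingHom _) Q)) := by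
    have hc : c.comp (Int.castRingHom _) = Int.castRingHom _ := RingHom.ext_int _ _
    rw [Int.cast_mul, Int.cast_natCast, mul_assoc, stdAddChar_natCast_mul, map_mul, map_intCast,
      map_eval, MvPolynomial.map_map, hc]
    rfl
  have hsum := π.card_smul_sum_comp_of_surjective (castHom_surjective (dvd_mul_left d g)).comp_left
    fun y => stdAddChar ((b : ZMod d) * eval y (map (Int.castRingHom _) Q))
  simp only [Fintype.card_fun, ZMod.card, Fintype.card_fin, nsmul_eq_mul, Nat.cast_pow] at hsum
  rw [weylF_zero_eq_sum_zmod, weylF_zero_eq_sum_zmod, sum_congr rfl fun x _ => hterm x]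
  have hd : (d : ℂ) ≠ 0 := Nat.cast_ne_zero.mpr (NeZero.ne d)
  have hg : (g : ℂ) ≠ 0 := Nat.cast_ne_zero.mpr (NeZero.ne g)
  field_simp
  push_cast at hsum ⊢
  linear_combination hsum

lemma Vcard_mul_le_sum_norm_weylF (q : ℕ) [NeZero q] (lam : ℤ) :
    (Vcard n Q q lam : ℝ) * q ≤ q ^ n * ∑ k ∈ range q, ‖weylF n Q q k 0‖ := by
  set P : (Fin n → ZMod q) → ZMod q := fun x => eval x (map (Int.castRingHom (ZMod q)) Q)
  set S : ZMod q → ℂ := fun a => ∑ x, stdAddChar (a * P x)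
  have hV : Vcard n Q q lam = #{x | P x = lam} := by
    rw [Vcard, Nat.card_eq_fintype_card, Fintype.card_subtype]
  have hS (k : ℕ) : ‖S k‖ = q ^ n * ‖weylF n Q q k 0‖ := by
    rw [weylF_zero_eq_sum_zmod, Int.cast_natCast, norm_mul, ← mul_assoc, norm_inv, norm_pow,
      Complex.norm_natCast, mul_inv_cancel₀ (by simp [NeZero.ne q]), one_mul]
  calc (Vcard n Q q lam : ℝ) * q = ‖(#{x | P x = lam} : ℂ) * q‖ := by simp [hV]
    _ = ‖∑ a, stdAddChar (-(a * (lam : ZMod q))) * S a‖ := by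
      rw [card_fiber_mul_eq_sum_stdAddChar]
    _ ≤ ∑ a, ‖S a‖ := (norm_sum_le _ _).trans_eq <| by simp
    _ = q ^ n * ∑ k ∈ range q, ‖weylF n Q q k 0‖ := by
      rw [← sum_range_natCast, mul_sum]
      exact sum_congr rfl fun k _ => hS k

lemma weylF_eq_weylF_div_gcd (q : ℕ) [NeZero q] (k : ℕ) :
    weylF n Q q k 0 = weylF n Q (q / q.gcd k) ((k / q.gcd k : ℕ) : ℤ) 0 := by
  have hg : 0 < q.gcd k := Nat.gcd_pos_of_pos_left k (Nat.pos_of_neZero q)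
  have : NeZero (q.gcd k) := NeZero.of_pos hg
  have : NeZero (q / q.gcd k) :=
    NeZero.of_pos (Nat.div_pos (Nat.gcd_le_left k (Nat.pos_of_neZero q)) hg)
  have h := weylF_natCast_mul_mul n Q (q.gcd k) (q / q.gcd k) (k / q.gcd k : ℕ)
  rwa [← Nat.cast_mul, Nat.mul_div_cancel' (Nat.gcd_dvd_left q k),
    Nat.mul_div_cancel' (Nat.gcd_dvd_right q k)] at h

variable {n Q} {β C₀ : ℝ}
  (hQ : ∀ q : ℕ, 2 ≤ q → ∀ a : ℕ, a < q → Nat.gcd a q = 1 →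
    ‖weylF n Q q (a : ℤ) 0‖ ≤ C₀ * (q : ℝ) ^ (-β))
include hQ

lemma norm_weylF_le_of_coprime (hC₀ : 1 ≤ C₀) {d b : ℕ} (hd : 0 < d) (hb : b < d)
    (hbd : Nat.gcd b d = 1) : ‖weylF n Q d (b : ℤ) 0‖ ≤ C₀ * (d : ℝ) ^ (-β) := by
  obtain rfl | hd : d = 1 ∨ 2 ≤ d := by omega
  · obtain rfl : b = 0 := by omega
    simpa [weylF_one] using hC₀
  · exact hQ d hd b hb hbd

lemma sum_norm_weylF_le (hC₀ : 1 ≤ C₀) (q : ℕ) [NeZero q] :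
    ∑ k ∈ range q, ‖weylF n Q q k 0‖ ≤
      C₀ * ∑ d ∈ q.divisors, (d : ℝ) ^ (1 - β) := by
  set f : ℕ → ℝ := fun d => C₀ * (d : ℝ) ^ (-β)
  have hq := Nat.pos_of_neZero q
  have hterm (k : ℕ) (hk : k ∈ range q) : ‖weylF n Q q k 0‖ ≤ f (q / q.gcd k) := by
    have hg : 0 < q.gcd k := Nat.gcd_pos_of_pos_left k hq
    rw [weylF_eq_weylF_div_gcd]
    refine norm_weylF_le_of_coprime hQ hC₀
      (Nat.div_pos (Nat.gcd_le_left k hq) hg)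
      (Nat.div_lt_div_of_lt_of_dvd (Nat.gcd_dvd_left q k) (mem_range.mp hk)) ?_
    rw [Nat.gcd_comm]
    exact Nat.coprime_div_gcd_div_gcd hg
  calc ∑ k ∈ range q, ‖weylF n Q q k 0‖
      ≤ ∑ k ∈ range q, f (q / q.gcd k) := sum_le_sum hterm
    _ = ∑ d ∈ q.divisors, d.totient • f d := Nat.sum_range_comp_div_gcd q f
    _ ≤ ∑ d ∈ q.divisors, (d : ℝ) * f d := by
      refine sum_le_sum fun d _ => ?_
      rw [nsmul_eq_mul]
      exact mul_le_mul_of_nonneg_right (mod_cast Nat.totient_le d)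
        (mul_nonneg (by linarith) (by positivity))
    _ = C₀ * ∑ d ∈ q.divisors, (d : ℝ) ^ (1 - β) := by
      rw [mul_sum]
      refine sum_congr rfl fun d hd => ?_
      rw [Real.rpow_sub (Nat.cast_pos.mpr (Nat.pos_of_mem_divisors hd)), Real.rpow_one]
      simp only [f, Real.rpow_neg (Nat.cast_nonneg d)]
      ring

end WeylSum

theorem stmt11 (β C₀ : ℝ) (hβ : 2 < β) (hC₀ : 1 ≤ C₀) :
    ∃ C' : ℝ,
      ∀ n : ℕ, 1 ≤ n → ∀ Q : MvPolynomial (Fin n) ℤ,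
        (∀ q : ℕ, 2 ≤ q → ∀ a : ℕ, a < q → Nat.gcd a q = 1 →
          ‖weylF n Q q (a : ℤ) 0‖ ≤ C₀ * (q : ℝ) ^ (-β)) →
        ∀ q : ℕ, 1 ≤ q → ∀ lam : ℤ,
          (Vcard n Q q lam : ℝ) ≤ C' * (q : ℝ) ^ (n - 1) := by
  set T := ∑' d : ℕ, (d : ℝ) ^ (1 - β)
  refine ⟨C₀ * T, fun n hn Q hQ q hq lam => ?_⟩
  have : NeZero q := NeZero.of_pos hq
  have hT : Summable fun d : ℕ => (d : ℝ) ^ (1 - β) := Real.summable_nat_rpow.mpr (by linarith)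
  have hsum : ∑ k ∈ range q, ‖weylF n Q q k 0‖ ≤ C₀ * T :=
    (sum_norm_weylF_le hQ hC₀ q).trans <| mul_le_mul_of_nonneg_left
      (hT.sum_le_tsum _ fun _ _ => by positivity) (by linarith)
  refine le_of_mul_le_mul_right ?_ (Nat.cast_pos.mpr hq)
  calc (Vcard n Q q lam : ℝ) * q ≤ q ^ n * ∑ k ∈ range q, ‖weylF n Q q k 0‖ :=
        Vcard_mul_le_sum_norm_weylF n Q q lam
    _ ≤ q ^ n * (C₀ * T) := by gcongr
    _ = C₀ * T * q ^ (n - 1) * q := by rw [← pow_sub_one_mul (by omega)]; ring
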